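/- arXiv:0907.1298 — 8 statements merged into one kernel-verified Lean document; each statement's English description precedes it below -/
import Mathlib

section
/- Consider a feasible instance of the BMILP, i.e., F ≠ ∅, and let v* = inf{c·x + e·z : (x,z) ∈ F}, which is finite by the boundedness assumptions. Let Δ be the maximum of 1 and the maximum absolute value of the determinant of a square submatrix of the (h+m)×d real matrix obtained by stacking D above B. Then v* is a rational number whose denominator is bounded by Δ: there exist integers a and q with 1 ≤ q ≤ Δ such that v* = a/q. -/
/-!
For integral `x`, the lower-level constraint `A x ≤ B z + u` depends on `z` only through
`w = ⌊B z + u⌋`. Hence `F` is the union, over finitely many admissible pairs `(ξ, w)`, of the sets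
`{ξ} × {z | (ξ, z) ∈ P, ⌊B z + u⌋ = w}`. Such a set is a polytope with some facets removed, so the
infimum of `e·z` over it is the minimum over the closed polytope
`{z | (ξ, z) ∈ P, w ≤ B z + u ≤ w + 1}`, which is attained at an extreme point (Krein–Milman).
An extreme point `z` is determined by its zero pattern together with the rows of `(D; B)` at which
`D z`, resp. `B z`, is integral, so by Cramer's rule `e·z` is a fraction whose denominator is the
absolute value of a nonsingular square subdeterminant of `(D; B)`. Finally, `v*` is the least of
these finitely many fractions.
-/

open Matrix

/-- A real vector has all integer entries. -/
def IsIntVec {n : ℕ} (x : Fin n → ℝ) : Prop := ∀ i, ∃ k : ℤ, x i = (k : ℝ)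

/-- The upper-level polyhedron P. -/
def upperP {n d h : ℕ} (C : Matrix (Fin h) (Fin n) ℤ) (D : Matrix (Fin h) (Fin d) ℤ)
    (p : Fin h → ℤ) : Set ((Fin n → ℝ) × (Fin d → ℝ)) :=
  {xz | (C.map ((↑) : ℤ → ℝ)).mulVec xz.1 + (D.map ((↑) : ℤ → ℝ)).mulVec xz.2 ≤
          (fun i => (p i : ℝ)) ∧ 0 ≤ xz.2}

/-- The bilevel feasible set F. -/
def bilevelF {n d m h : ℕ} (A : Matrix (Fin m) (Fin n) ℤ) (B : Matrix (Fin m) (Fin d) ℤ)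
    (C : Matrix (Fin h) (Fin n) ℤ) (D : Matrix (Fin h) (Fin d) ℤ)
    (ψ : Fin n → ℤ) (u : Fin m → ℤ) (p : Fin h → ℤ) :
    Set ((Fin n → ℝ) × (Fin d → ℝ)) :=
  {xz | xz ∈ upperP C D p ∧ IsIntVec xz.1 ∧
    (A.map ((↑) : ℤ → ℝ)).mulVec xz.1 ≤
      (B.map ((↑) : ℤ → ℝ)).mulVec xz.2 + (fun i => (u i : ℝ)) ∧
    ∀ x' : Fin n → ℝ, IsIntVec x' →
      (A.map ((↑) : ℤ → ℝ)).mulVec x' ≤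
        (B.map ((↑) : ℤ → ℝ)).mulVec xz.2 + (fun i => (u i : ℝ)) →
      (fun i => (ψ i : ℝ)) ⬝ᵥ xz.1 ≤ (fun i => (ψ i : ℝ)) ⬝ᵥ x'}

open Filter Topology Bornology

theorem Int.cast_dotProduct {n : Type*} [Fintype n] (v w : n → ℤ) :
    ((v ⬝ᵥ w : ℤ) : ℝ) = (↑) ∘ v ⬝ᵥ (↑) ∘ w :=
  (Int.castRingHom ℝ).map_dotProduct v w

theorem Int.cast_comp_mulVec {m n : Type*} [Fintype n] (M : Matrix m n ℤ) (v : n → ℤ) :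
    (↑) ∘ (M *ᵥ v) = M.map ((↑) : ℤ → ℝ) *ᵥ (↑) ∘ v :=
  funext <| (Int.castRingHom ℝ).map_mulVec M v

theorem Matrix.comp_dotProduct_comp_of_injective {ι κ R : Type*} [Fintype ι] [Fintype κ]
    [NonUnitalNonAssocSemiring R] {σ : ι → κ} (hσ : Function.Injective σ) {v : κ → R}
    (hv : ∀ j ∉ Set.range σ, v j = 0) (w : κ → R) : w ∘ σ ⬝ᵥ v ∘ σ = w ⬝ᵥ v :=
  Fintype.sum_of_injective σ hσ _ _ (fun j hj => by simp [hv j hj]) fun _ => rfl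

theorem Matrix.exists_submatrix_det_ne_zero_of_mulVec_injective {K ι : Type*} [Field K]
    [Finite ι] {k : ℕ} (N : Matrix ι (Fin k) K) (hN : Function.Injective N.mulVec) :
    ∃ τ : Fin k → ι, Function.Injective τ ∧ (N.submatrix τ id).det ≠ 0 := by
  obtain ⟨κ, a, ha, hspan, hli⟩ := exists_linearIndependent' K N.row
  have := Finite.of_injective a ha
  have := Fintype.ofFinite κ
  have hcard : Fintype.card κ = k := by
    rw [linearIndependent_iff_card_eq_finrank_span.1 hli, Set.finrank, hspan,
      ← N.rank_eq_finrank_span_row, Matrix.rank, LinearMap.finrank_range_of_inj hN,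
      Module.finrank_fin_fun]
  let e := Fintype.equivFinOfCardEq hcard
  refine ⟨a ∘ e.symm, ha.comp e.symm.injective, ?_⟩
  rw [← isUnit_iff_ne_zero, ← Matrix.isUnit_iff_isUnit_det,
    ← Matrix.linearIndependent_rows_iff_isUnit]
  exact hli.comp e.symm e.symm.injective

theorem Matrix.exists_intCast_dotProduct_eq_div_abs_det {n : Type*} [Fintype n] [DecidableEq n]
    (L : Matrix n n ℤ) (hL : L.det ≠ 0) {y : n → ℝ} {b : n → ℤ}
    (hy : L.map (↑) *ᵥ y = (↑) ∘ b) (e : n → ℤ) :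
    ∃ a : ℤ, (↑) ∘ e ⬝ᵥ y = a / |L.det| := by
  -- multiplying `L y = b` by the adjugate clears the denominator `det L`
  have hdet : (L.det : ℝ) • y = (↑) ∘ (L.adjugate *ᵥ b) := by
    have hadj : (L.map ((↑) : ℤ → ℝ)).adjugate = L.adjugate.map (↑) :=
      ((Int.castRingHom ℝ).map_adjugate L).symm
    rw [Int.cast_det, ← one_mulVec y, ← smul_mulVec, ← adjugate_mul, ← mulVec_mulVec, hy, hadj,
      Int.cast_comp_mulVec]
  have hL' : (L.det : ℝ) ≠ 0 := by exact_mod_cast hL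
  have hval : (↑) ∘ e ⬝ᵥ y = ((e ⬝ᵥ L.adjugate *ᵥ b : ℤ) : ℝ) / L.det := by
    rw [eq_div_iff hL', mul_comm, ← smul_eq_mul, ← dotProduct_smul, hdet, Int.cast_dotProduct]
  rcases hL.lt_or_gt with hneg | hpos
  · refine ⟨-(e ⬝ᵥ L.adjugate *ᵥ b), ?_⟩
    rw [hval, abs_of_neg hneg, Int.cast_neg, Int.cast_neg, neg_div_neg_eq]
  · exact ⟨e ⬝ᵥ L.adjugate *ᵥ b, by rw [hval, abs_of_pos hpos]⟩

theorem Matrix.exists_dotProduct_eq_div_abs_det_submatrix {ι κ : Type*} [Finite ι] [Fintype κ]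
    (M : Matrix ι κ ℤ) (z : κ → ℝ)
    (hz : ∀ v : κ → ℝ, (∀ i, (∃ b : ℤ, (M.map (↑) *ᵥ z) i = b) → (M.map (↑) *ᵥ v) i = 0) →
      (∀ j, z j = 0 → v j = 0) → v = 0)
    (e : κ → ℤ) :
    ∃ (k : ℕ) (ρ : Fin k → ι) (σ : Fin k → κ), Function.Injective ρ ∧ Function.Injective σ ∧
      (M.submatrix ρ σ).det ≠ 0 ∧ ∃ a : ℤ, (↑) ∘ e ⬝ᵥ z = a / |(M.submatrix ρ σ).det| := by
  classical
  let J := {j // z j ≠ 0}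
  let σ : Fin (Fintype.card J) → κ := Subtype.val ∘ (Fintype.equivFin J).symm
  have hσ : Function.Injective σ :=
    Subtype.val_injective.comp (Fintype.equivFin J).symm.injective
  have hσz : ∀ j ∉ Set.range σ, z j = 0 := fun j hj => by
    by_contra h
    exact hj ⟨Fintype.equivFin J ⟨j, h⟩, by simp [σ]⟩
  have hrow : ∀ i {v : κ → ℝ}, (∀ j ∉ Set.range σ, v j = 0) →
      (M.map (↑) *ᵥ v) i = ((M.map (↑)).submatrix id σ *ᵥ v ∘ σ) i :=
    fun i _ hv => (comp_dotProduct_comp_of_injective hσ hv _).symm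
  let T := {i // ∃ b : ℤ, (M.map (↑) *ᵥ z) i = b}
  let N : Matrix T (Fin (Fintype.card J)) ℝ := (M.map (↑)).submatrix Subtype.val σ
  have hN : Function.Injective N.mulVec := by
    refine (injective_iff_map_eq_zero N.mulVecLin).2 fun v hv => ?_
    let v' := Function.extend σ v 0
    have hv'σ : v' ∘ σ = v := funext (hσ.extend_apply v 0)
    have hv'0 : ∀ j ∉ Set.range σ, v' j = 0 := fun j hj =>
      Function.extend_apply' _ _ _ fun ⟨a, ha⟩ => hj ⟨a, ha⟩
    have hv' : v' = 0 := hz v' (fun i hi => by rw [hrow i hv'0, hv'σ]; exact congrFun hv ⟨i, hi⟩)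
      fun j hj => hv'0 j fun ⟨a, ha⟩ => ((Fintype.equivFin J).symm a).2 (by rwa [← ha] at hj)
    rw [← hv'σ, hv']
    rfl
  obtain ⟨τ, hτ, hdet⟩ := N.exists_submatrix_det_ne_zero_of_mulVec_injective hN
  let L := M.submatrix (Subtype.val ∘ τ) σ
  have hL : L.det ≠ 0 := by
    have : (L.det : ℝ) ≠ 0 := by rw [Int.cast_det]; exact hdet
    exact_mod_cast this
  have hy : L.map (↑) *ᵥ z ∘ σ = (↑) ∘ fun a => (τ a).2.choose := by
    funext a
    rw [Function.comp_apply, ← (τ a).2.choose_spec, hrow _ hσz]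
    rfl
  obtain ⟨a, ha⟩ := L.exists_intCast_dotProduct_eq_div_abs_det hL hy (e ∘ σ)
  refine ⟨_, _, σ, Subtype.val_injective.comp hτ, hσ, hL, a, ?_⟩
  rw [← ha, ← comp_dotProduct_comp_of_injective hσ hσz]
  rfl

theorem IsCompact.exists_mem_extremePoints_isMinOn {E : Type*} [AddCommGroup E] [Module ℝ E]
    [TopologicalSpace E] [T2Space E] [IsTopologicalAddGroup E] [ContinuousSMul ℝ E]
    [LocallyConvexSpace ℝ E] {s : Set E} (hs : IsCompact s) (hne : s.Nonempty)
    (l : StrongDual ℝ E) : ∃ x ∈ s.extremePoints ℝ, IsMinOn l s x := by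
  have hface : IsExposed ℝ s {y ∈ s | ∀ w ∈ s, (-l) w ≤ (-l) y} := fun _ => ⟨-l, rfl⟩
  obtain ⟨z, hzs, hz⟩ := hs.exists_isMinOn hne l.continuous.continuousOn
  obtain ⟨y, hy⟩ := (hface.isCompact hs).extremePoints_nonempty
    ⟨z, hzs, fun w hw => neg_le_neg (hz hw)⟩
  exact ⟨y, hface.isExtreme.extremePoints_subset_extremePoints hy,
    fun w hw => neg_le_neg_iff.1 (hy.1.2 w hw)⟩

theorem Matrix.eq_zero_of_mem_extremePoints_setOf_mulVec_le {ι κ : Type*} [Finite ι] [Fintype κ]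
    {R : Matrix ι κ ℝ} {b : ι → ℝ} {z : κ → ℝ} (hz : z ∈ {x | R *ᵥ x ≤ b}.extremePoints ℝ)
    {v : κ → ℝ} (hv : ∀ i, (R *ᵥ z) i = b i → (R *ᵥ v) i = 0) : v = 0 := by
  -- along `v`, tight rows stay tight and slack rows stay slack for small steps
  have hline : ∀ᶠ t in 𝓝 (0 : ℝ), R *ᵥ (z + t • v) ≤ b := by
    refine eventually_all.2 fun i => ?_
    simp only [mulVec_add, mulVec_smul, Pi.add_apply, Pi.smul_apply, smul_eq_mul]
    by_cases hi : (R *ᵥ z) i = b i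
    · exact Eventually.of_forall fun t => by simp [hi, hv i hi]
    · have hlt : (R *ᵥ z) i + 0 * (R *ᵥ v) i < b i := by
        simpa using lt_of_le_of_ne (hz.1 i) hi
      exact (((continuous_const.add (continuous_id.mul continuous_const)).tendsto 0).eventually
        (gt_mem_nhds hlt)).mono fun _ => le_of_lt
  obtain ⟨ε, hε, hball⟩ := Metric.eventually_nhds_iff.1 hline
  have hmem : ∀ t : ℝ, |t| < ε → z + t • v ∈ {x | R *ᵥ x ≤ b} := fun t ht =>
    hball (by simpa using ht)
  have hε2 : |ε / 2| < ε := by rw [abs_of_pos (half_pos hε)]; linarith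
  have hseg : z ∈ openSegment ℝ (z + (ε / 2) • v) (z + (-(ε / 2)) • v) :=
    ⟨1 / 2, 1 / 2, by norm_num, by norm_num, by norm_num, by module⟩
  have := hz.2 (hmem _ hε2) (hmem _ (by rwa [abs_neg])) hseg
  simpa [hε.ne'] using this

theorem isIntVec_iff {n : ℕ} {x : Fin n → ℝ} : IsIntVec x ↔ ∃ ξ : Fin n → ℤ, x = (↑) ∘ ξ :=
  ⟨fun hx => ⟨fun i => (hx i).choose, funext fun i => (hx i).choose_spec⟩,
    by rintro ⟨ξ, rfl⟩ i; exact ⟨ξ i, rfl⟩⟩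

theorem isClosed_upperP {n d h : ℕ} (C : Matrix (Fin h) (Fin n) ℤ) (D : Matrix (Fin h) (Fin d) ℤ)
    (p : Fin h → ℤ) : IsClosed (upperP C D p) :=
  (isClosed_le (f := fun xz : (Fin n → ℝ) × (Fin d → ℝ) => C.map (↑) *ᵥ xz.1 + D.map (↑) *ᵥ xz.2)
    (by fun_prop) continuous_const).inter (isClosed_le continuous_const continuous_snd)

section Bilevel

variable {n d m h : ℕ} (A : Matrix (Fin m) (Fin n) ℤ) (B : Matrix (Fin m) (Fin d) ℤ)
  (C : Matrix (Fin h) (Fin n) ℤ) (D : Matrix (Fin h) (Fin d) ℤ) (ψ : Fin n → ℤ) (u : Fin m → ℤ)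
  (p : Fin h → ℤ)

def lowerRhs (z : Fin d → ℝ) : Fin m → ℝ := B.map (↑) *ᵥ z + (↑) ∘ u

def piece (ξ : Fin n → ℤ) (w : Fin m → ℤ) : Set (Fin d → ℝ) :=
  {z | ((↑) ∘ ξ, z) ∈ upperP C D p ∧ (fun i => ⌊lowerRhs B u z i⌋) = w}

def closedPiece (ξ : Fin n → ℤ) (w : Fin m → ℤ) : Set (Fin d → ℝ) :=
  {z | ((↑) ∘ ξ, z) ∈ upperP C D p ∧ (↑) ∘ w ≤ lowerRhs B u z ∧ lowerRhs B u z ≤ (↑) ∘ w + 1}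

def pieceRows : Matrix (((Fin h ⊕ Fin m) ⊕ Fin m) ⊕ Fin d) (Fin d) ℤ :=
  fromRows (fromRows (fromRows D B) (-B)) (-1)

def pieceRhs (ξ : Fin n → ℤ) (w : Fin m → ℤ) : ((Fin h ⊕ Fin m) ⊕ Fin m) ⊕ Fin d → ℤ :=
  Sum.elim (Sum.elim (Sum.elim (p - C *ᵥ ξ) (w + 1 - u)) (u - w)) 0

def pieceIndex : Set ((Fin n → ℤ) × (Fin m → ℤ)) :=
  {g | A *ᵥ g.1 ≤ g.2 ∧ (∀ ξ, A *ᵥ ξ ≤ g.2 → ψ ⬝ᵥ g.1 ≤ ψ ⬝ᵥ ξ) ∧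
    (piece B C D u p g.1 g.2).Nonempty}

variable {A B C D ψ u p}

theorem intCast_mulVec_le_lowerRhs_iff {z : Fin d → ℝ} {ξ : Fin n → ℤ} :
    A.map (↑) *ᵥ (↑) ∘ ξ ≤ lowerRhs B u z ↔ A *ᵥ ξ ≤ fun i => ⌊lowerRhs B u z i⌋ := by
  rw [← Int.cast_comp_mulVec]
  exact forall_congr' fun i => Int.le_floor.symm

theorem bilevelF_eq_biUnion : bilevelF A B C D ψ u p =
    ⋃ g ∈ pieceIndex A B C D ψ u p, {(↑) ∘ g.1} ×ˢ piece B C D u p g.1 g.2 := by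
  have hψ : ∀ ξ ξ' : Fin n → ℤ, (fun i => (ψ i : ℝ)) ⬝ᵥ (↑) ∘ ξ ≤ (fun i => (ψ i : ℝ)) ⬝ᵥ (↑) ∘ ξ' ↔
      ψ ⬝ᵥ ξ ≤ ψ ⬝ᵥ ξ' := fun ξ ξ' => by
    rw [← Int.cast_le (R := ℝ), Int.cast_dotProduct, Int.cast_dotProduct]; rfl
  ext ⟨x, z⟩
  simp only [Set.mem_iUnion, Set.mem_prod, Set.mem_singleton_iff, exists_prop]
  constructor
  · rintro ⟨hP, hx, hA, hopt⟩
    obtain ⟨ξ, rfl⟩ := isIntVec_iff.1 hx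
    refine ⟨(ξ, fun i => ⌊lowerRhs B u z i⌋), ⟨intCast_mulVec_le_lowerRhs_iff.1 hA,
      fun ξ' hξ' => ?_, z, hP, rfl⟩, rfl, hP, rfl⟩
    exact (hψ ξ ξ').1 (hopt _ (isIntVec_iff.2 ⟨ξ', rfl⟩) (intCast_mulVec_le_lowerRhs_iff.2 hξ'))
  · rintro ⟨⟨ξ, w⟩, ⟨hA, hopt, -⟩, rfl, hP, rfl⟩
    refine ⟨hP, isIntVec_iff.2 ⟨ξ, rfl⟩, intCast_mulVec_le_lowerRhs_iff.2 hA,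
      fun x' hx' hAx' => ?_⟩
    obtain ⟨ξ', rfl⟩ := isIntVec_iff.1 hx'
    exact (hψ ξ ξ').2 (hopt ξ' (intCast_mulVec_le_lowerRhs_iff.1 hAx'))

theorem mem_piece_iff {ξ : Fin n → ℤ} {w : Fin m → ℤ} {z : Fin d → ℝ} :
    z ∈ piece B C D u p ξ w ↔ z ∈ closedPiece B C D u p ξ w ∧ ∀ i, lowerRhs B u z i < w i + 1 := by
  simp only [piece, closedPiece, Set.mem_ofPred_eq, funext_iff, Int.floor_eq_iff, Pi.le_def,
    Function.comp_apply, Pi.add_apply, Pi.one_apply, forall_and]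
  exact ⟨fun ⟨hP, hlo, hhi⟩ => ⟨⟨hP, hlo, fun i => (hhi i).le⟩, hhi⟩,
    fun ⟨⟨hP, hlo, _⟩, hhi⟩ => ⟨hP, hlo, hhi⟩⟩

theorem piece_subset_closedPiece {ξ : Fin n → ℤ} {w : Fin m → ℤ} :
    piece B C D u p ξ w ⊆ closedPiece B C D u p ξ w :=
  fun _ hz => (mem_piece_iff.1 hz).1

theorem pieceRows_mulVec (z : Fin d → ℝ) : (pieceRows B D).map (↑) *ᵥ z =
    Sum.elim (Sum.elim ((fromRows D B).map (↑) *ᵥ z) (-(B.map (↑) *ᵥ z))) (-z) := by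
  rw [pieceRows, fromRows_map, fromRows_map, fromRows_mulVec, fromRows_mulVec,
    Matrix.map_neg _ Int.cast_neg, Matrix.map_neg _ Int.cast_neg,
    Matrix.map_one _ Int.cast_zero Int.cast_one, neg_mulVec, neg_mulVec, one_mulVec]

theorem closedPiece_eq_setOf_mulVec_le (ξ : Fin n → ℤ) (w : Fin m → ℤ) :
    closedPiece B C D u p ξ w = {z | (pieceRows B D).map (↑) *ᵥ z ≤ (↑) ∘ pieceRhs C u p ξ w} := by
  ext z
  simp only [closedPiece, upperP, lowerRhs, pieceRhs, Set.mem_ofPred_eq, pieceRows_mulVec,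
    fromRows_map, fromRows_mulVec, Sum.comp_elim, Sum.elim_le_elim_iff, ← Int.cast_comp_mulVec]
  simp only [Pi.le_def, Pi.add_apply, Pi.sub_apply, Pi.neg_apply, Pi.zero_apply, Pi.one_apply,
    Function.comp_apply, Int.cast_sub, Int.cast_add, Int.cast_one, Int.cast_zero, le_sub_iff_add_le,
    neg_nonpos, add_comm, ← sub_eq_add_neg, sub_le_iff_le_add]
  tauto

theorem isClosed_closedPiece (ξ : Fin n → ℤ) (w : Fin m → ℤ) :
    IsClosed (closedPiece B C D u p ξ w) := by
  rw [closedPiece_eq_setOf_mulVec_le]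
  exact isClosed_le (Continuous.matrix_mulVec continuous_const continuous_id) continuous_const

theorem convex_closedPiece (ξ : Fin n → ℤ) (w : Fin m → ℤ) :
    Convex ℝ (closedPiece B C D u p ξ w) := by
  rw [closedPiece_eq_setOf_mulVec_le]
  exact (convex_Iic _).linear_preimage (mulVecLin _)

theorem isBounded_closedPiece (hP : IsBounded (upperP C D p)) (ξ : Fin n → ℤ) (w : Fin m → ℤ) :
    IsBounded (closedPiece B C D u p ξ w) :=
  hP.image_snd.subset fun _ hz => ⟨_, hz.1, rfl⟩

theorem closedPiece_subset_closure_piece {ξ : Fin n → ℤ} {w : Fin m → ℤ}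
    (hne : (piece B C D u p ξ w).Nonempty) :
    closedPiece B C D u p ξ w ⊆ closure (piece B C D u p ξ w) := by
  obtain ⟨z₀, hz₀⟩ := hne
  rw [mem_piece_iff] at hz₀
  intro z hz
  -- the open segment from `z` to `z₀` lies in the piece
  refine closure_mono (fun x hx => ?_)
    (segment_subset_closure_openSegment (left_mem_segment ℝ z z₀))
  obtain ⟨a, b, ha, hb, hab, rfl⟩ := hx
  refine mem_piece_iff.2 ⟨convex_closedPiece ξ w hz hz₀.1 ha.le hb.le hab, fun i => ?_⟩
  have hcomb : lowerRhs B u (a • z + b • z₀) = a • lowerRhs B u z + b • lowerRhs B u z₀ := by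
    simp only [lowerRhs, mulVec_add, mulVec_smul, smul_add]
    rw [add_add_add_comm, ← add_smul, hab, one_smul]
  have hzi : lowerRhs B u z i ≤ w i + 1 := hz.2.2 i
  rw [hcomb, Pi.add_apply, Pi.smul_apply, Pi.smul_apply, smul_eq_mul, smul_eq_mul]
  obtain rfl : a = 1 - b := by linarith
  nlinarith [mul_le_mul_of_nonneg_left hzi ha.le, mul_lt_mul_of_pos_left (hz₀.2 i) hb]

theorem exists_isMinOn_closedPiece_eq_div_abs_det (hP : IsBounded (upperP C D p))
    {ξ : Fin n → ℤ} {w : Fin m → ℤ} (hne : (closedPiece B C D u p ξ w).Nonempty) (e : Fin d → ℤ) :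
    ∃ z ∈ closedPiece B C D u p ξ w, IsMinOn ((↑) ∘ e ⬝ᵥ ·) (closedPiece B C D u p ξ w) z ∧
      ∃ (k : ℕ) (ρ : Fin k → Fin h ⊕ Fin m) (σ : Fin k → Fin d), Function.Injective ρ ∧
        Function.Injective σ ∧ ((fromRows D B).submatrix ρ σ).det ≠ 0 ∧
        ∃ a : ℤ, (↑) ∘ e ⬝ᵥ z = a / |((fromRows D B).submatrix ρ σ).det| := by
  have hcpt : IsCompact (closedPiece B C D u p ξ w) := Metric.isCompact_of_isClosed_isBounded
    (isClosed_closedPiece ξ w) (isBounded_closedPiece hP ξ w)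
  obtain ⟨z, hzext, hzmin⟩ := hcpt.exists_mem_extremePoints_isMinOn hne
    (LinearMap.toContinuousLinearMap (dotProductBilin ℝ ℝ ((↑) ∘ e)))
  refine ⟨z, hzext.1, hzmin, (fromRows D B).exists_dotProduct_eq_div_abs_det_submatrix z
    (fun v hT h0 => ?_) e⟩
  rw [closedPiece_eq_setOf_mulVec_le] at hzext
  refine eq_zero_of_mem_extremePoints_setOf_mulVec_le hzext ?_
  -- a tight row of the system is either a row of `(D; B)` that is integral at `z`,
  -- or a tight sign constraint `z j = 0`
  rintro ((i | i) | j) hi <;>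
    simp only [pieceRows_mulVec, pieceRhs, Sum.elim_inl, Sum.elim_inr, Function.comp_apply,
      Pi.neg_apply, Pi.zero_apply, Int.cast_zero, neg_eq_zero] at hi ⊢
  · exact hT _ ⟨_, hi⟩
  · have hBi := hT (Sum.inr i) ⟨-(u - w) i, by
      rw [fromRows_map, fromRows_mulVec, Sum.elim_inr, Int.cast_neg, ← hi, neg_neg]⟩
    rwa [fromRows_map, fromRows_mulVec, Sum.elim_inr] at hBi
  · exact h0 j hi

theorem exists_isGLB_objective_piece (hP : IsBounded (upperP C D p)) {Δ : ℝ}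
    (hΔ : ∀ (k : ℕ) (ρ : Fin k → (Fin h ⊕ Fin m)) (σ : Fin k → Fin d),
      Function.Injective ρ → Function.Injective σ →
      |(((fromRows (D.map ((↑) : ℤ → ℝ)) (B.map ((↑) : ℤ → ℝ))).submatrix ρ σ).det)| ≤ Δ)
    (c : Fin n → ℤ) (e : Fin d → ℤ) {ξ : Fin n → ℤ} {w : Fin m → ℤ}
    (hne : (piece B C D u p ξ w).Nonempty) :
    ∃ a q : ℤ, 1 ≤ q ∧ (q : ℝ) ≤ Δ ∧ IsGLB ((fun xz : (Fin n → ℝ) × (Fin d → ℝ) =>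
      (fun i => (c i : ℝ)) ⬝ᵥ xz.1 + (fun i => (e i : ℝ)) ⬝ᵥ xz.2) ''
        ({(↑) ∘ ξ} ×ˢ piece B C D u p ξ w)) (a / q) := by
  obtain ⟨z, hz, hmin, k, ρ, σ, hρ, hσ, hdet, a, ha⟩ :=
    exists_isMinOn_closedPiece_eq_div_abs_det hP (hne.mono piece_subset_closedPiece) e
  set q := |((fromRows D B).submatrix ρ σ).det|
  have hq : (q : ℝ) ≤ Δ := by
    have := hΔ k ρ σ hρ hσ
    rwa [← fromRows_map, submatrix_map, ← Int.cast_det, ← Int.cast_abs] at this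
  have hq0 : (q : ℝ) ≠ 0 := by positivity
  refine ⟨c ⬝ᵥ ξ * q + a, q, Int.one_le_abs hdet, hq, ?_⟩
  have hval : (fun i => (c i : ℝ)) ⬝ᵥ (↑) ∘ ξ + (fun i => (e i : ℝ)) ⬝ᵥ z =
      ((c ⬝ᵥ ξ * q + a : ℤ) : ℝ) / q := by
    rw [eq_div_iff hq0, add_mul, show (fun i => (e i : ℝ)) = (↑) ∘ e from rfl, ha,
      div_mul_cancel₀ _ hq0, show (fun i => (c i : ℝ)) = (↑) ∘ c from rfl, ← Int.cast_dotProduct]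
    push_cast
    ring
  rw [← hval]
  refine isGLB_of_mem_closure ?_
    (map_mem_closure (x := (((↑) : ℤ → ℝ) ∘ ξ, z)) ?_ ?_ (Set.mapsTo_image _ _))
  · rintro _ ⟨⟨x, y⟩, ⟨hx, hy⟩, rfl⟩
    obtain rfl : x = _ := hx
    exact add_le_add_right (isMinOn_iff.1 hmin y (piece_subset_closedPiece hy)) _
  · fun_prop
  · rw [closure_prod_eq, closure_singleton]
    exact ⟨rfl, closedPiece_subset_closure_piece hne hz⟩

theorem finite_setOf_intCast_comp_mem {ι : Type*} [Fintype ι] {K : Set (ι → ℝ)}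
    (hK : IsBounded K) : {v : ι → ℤ | (↑) ∘ v ∈ K}.Finite := by
  classical
  obtain ⟨R, hR⟩ := isBounded_iff_forall_norm_le.1 hK
  refine (Set.finite_Icc (-fun _ => ⌈R⌉) fun _ => ⌈R⌉).subset fun v hv => ?_
  have hv : ∀ i, |v i| ≤ ⌈R⌉ := fun i => by
    have := (norm_le_pi_norm (((↑) : ℤ → ℝ) ∘ v) i).trans (hR _ hv)
    rw [Real.norm_eq_abs, Function.comp_apply, ← Int.cast_abs] at this
    exact_mod_cast this.trans (Int.le_ceil R)
  exact ⟨fun i => (abs_le.1 (hv i)).1, fun i => (abs_le.1 (hv i)).2⟩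

theorem finite_pieceIndex (hP : IsBounded (upperP C D p)) :
    (pieceIndex A B C D ψ u p).Finite := by
  have hK : IsCompact (upperP C D p) :=
    Metric.isCompact_of_isClosed_isBounded (isClosed_upperP C D p) hP
  have hrhs : IsBounded ((fun xz => lowerRhs B u xz.2) '' upperP C D p) :=
    (hK.image (by unfold lowerRhs; fun_prop)).isBounded
  refine ((finite_setOf_intCast_comp_mem hP.image_fst).prod
    (finite_setOf_intCast_comp_mem (hrhs.cthickening (δ := 1)))).subset ?_
  rintro ⟨ξ, w⟩ ⟨-, -, z, hz, rfl⟩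
  refine ⟨⟨_, hz, rfl⟩, Metric.mem_cthickening_of_dist_le _ _ _ _ ⟨_, hz, rfl⟩
    ((dist_pi_le_iff zero_le_one).2 fun i => ?_)⟩
  show |((⌊lowerRhs B u z i⌋ : ℤ) : ℝ) - lowerRhs B u z i| ≤ 1
  rw [abs_le]
  constructor <;> linarith [Int.floor_le (lowerRhs B u z i), Int.lt_floor_add_one (lowerRhs B u z i)]

end Bilevel

theorem bmilp_infimum_denominator_bound_general
    {n d m h : ℕ}
    (A : Matrix (Fin m) (Fin n) ℤ) (B : Matrix (Fin m) (Fin d) ℤ)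
    (C : Matrix (Fin h) (Fin n) ℤ) (D : Matrix (Fin h) (Fin d) ℤ)
    (c : Fin n → ℤ) (e : Fin d → ℤ) (ψ : Fin n → ℤ) (u : Fin m → ℤ) (p : Fin h → ℤ)
    -- boundedness assumptions
    (hPbdd : Bornology.IsBounded (upperP C D p))
    -- feasibility
    (hfeas : (bilevelF A B C D ψ u p).Nonempty)
    -- Δ bounds 1 and all absolute values of determinants of square submatrices of (D; B)
    (Δ : ℝ)
    (hΔ : ∀ (k : ℕ) (ρ : Fin k → (Fin h ⊕ Fin m)) (σ : Fin k → Fin d),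
      Function.Injective ρ → Function.Injective σ →
      |(((Matrix.fromRows (D.map ((↑) : ℤ → ℝ)) (B.map ((↑) : ℤ → ℝ))).submatrix ρ σ).det)| ≤ Δ)
    -- the infimum value
    (vstar : ℝ)
    (hvstar : vstar = sInf ((fun xz : (Fin n → ℝ) × (Fin d → ℝ) =>
      (fun i => (c i : ℝ)) ⬝ᵥ xz.1 + (fun i => (e i : ℝ)) ⬝ᵥ xz.2) '' bilevelF A B C D ψ u p)) :
    ∃ (a q : ℤ), 1 ≤ q ∧ (q : ℝ) ≤ Δ ∧ vstar = (a : ℝ) / (q : ℝ) := by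
  have hpiece : ∀ g ∈ pieceIndex A B C D ψ u p, ∃ a q : ℤ, 1 ≤ q ∧ (q : ℝ) ≤ Δ ∧
      IsGLB ((fun xz : (Fin n → ℝ) × (Fin d → ℝ) =>
        (fun i => (c i : ℝ)) ⬝ᵥ xz.1 + (fun i => (e i : ℝ)) ⬝ᵥ xz.2) ''
          ({(↑) ∘ g.1} ×ˢ piece B C D u p g.1 g.2)) (a / q) :=
    fun _ hg => exists_isGLB_objective_piece hPbdd hΔ c e hg.2.2
  choose! a q hq1 hqΔ hglb using hpiece
  rw [bilevelF_eq_biUnion] at hfeas hvstar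
  obtain ⟨g₀, hg₀, hmin⟩ := Set.exists_min_image _ (fun g => (a g : ℝ) / q g)
    (finite_pieceIndex hPbdd) ((Set.nonempty_biUnion.1 hfeas).imp fun _ h => h.1)
  refine ⟨a g₀, q g₀, hq1 g₀ hg₀, hqΔ g₀ hg₀, hvstar ▸ IsGLB.csInf_eq ?_ (hfeas.image _)⟩
  rw [Set.image_iUnion₂, Set.biUnion_eq_iUnion,
    ← isGLB_iUnion_iff_of_isGLB fun g : pieceIndex A B C D ψ u p => hglb g g.2]
  exact IsLeast.isGLB ⟨⟨⟨g₀, hg₀⟩, rfl⟩, by rintro _ ⟨g, rfl⟩; exact hmin g g.2⟩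

/-- Proposition 1 (denominator bound): for a feasible BMILP instance, the infimum value
`v* = inf {c·x + e·z : (x,z) ∈ F}` is a rational number `a / q` whose denominator `q`
is bounded by `Δ`, where `Δ` is any real number that is at least `1` and at least the
absolute value of the determinant of every square submatrix of the matrix obtained by
stacking `D` above `B`. -/
theorem bmilp_infimum_denominator_bound
    {n d m h : ℕ} (hn : 0 < n) (hd : 0 < d) (hm : 0 < m) (hh : 0 < h)
    (A : Matrix (Fin m) (Fin n) ℤ) (B : Matrix (Fin m) (Fin d) ℤ)
    (C : Matrix (Fin h) (Fin n) ℤ) (D : Matrix (Fin h) (Fin d) ℤ)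
    (c : Fin n → ℤ) (e : Fin d → ℤ) (ψ : Fin n → ℤ) (u : Fin m → ℤ) (p : Fin h → ℤ)
    -- boundedness assumptions
    (hPbdd : Bornology.IsBounded (upperP C D p))
    (hLowbdd : ∀ z : Fin d → ℝ, (∃ x : Fin n → ℝ, (x, z) ∈ upperP C D p) →
      Bornology.IsBounded {x : Fin n → ℝ |
        (A.map ((↑) : ℤ → ℝ)).mulVec x ≤
          (B.map ((↑) : ℤ → ℝ)).mulVec z + (fun i => (u i : ℝ))})
    -- feasibility
    (hfeas : (bilevelF A B C D ψ u p).Nonempty)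
    -- Δ bounds 1 and all absolute values of determinants of square submatrices of (D; B)
    (Δ : ℝ) (hΔ1 : 1 ≤ Δ)
    (hΔ : ∀ (k : ℕ) (ρ : Fin k → (Fin h ⊕ Fin m)) (σ : Fin k → Fin d),
      Function.Injective ρ → Function.Injective σ →
      |(((Matrix.fromRows (D.map ((↑) : ℤ → ℝ)) (B.map ((↑) : ℤ → ℝ))).submatrix ρ σ).det)| ≤ Δ)
    -- the infimum value
    (vstar : ℝ)
    (hvstar : vstar = sInf ((fun xz : (Fin n → ℝ) × (Fin d → ℝ) =>
      (fun i => (c i : ℝ)) ⬝ᵥ xz.1 + (fun i => (e i : ℝ)) ⬝ᵥ xz.2) '' bilevelF A B C D ψ u p)) :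
    ∃ (a q : ℤ), 1 ≤ q ∧ (q : ℝ) ≤ Δ ∧ vstar = (a : ℝ) / (q : ℝ) :=
  bmilp_infimum_denominator_bound_general A B C D c e ψ u p hPbdd hfeas Δ hΔ vstar hvstar
end

section
/- Suppose (x̄, z̄) ∈ F, and suppose z ∈ ℝ^d satisfies z ≥ 0, D·z ≤ p − C·x̄, and ⌊(B·z + u)_i⌋ = ⌊(B·z̄ + u)_i⌋ for every i = 1,…,m. Then (x̄, z) ∈ F. -/
open Matrix

lemma intEntry_mulVec {n m : ℕ} (A : Matrix (Fin m) (Fin n) ℤ) (x : Fin n → ℝ)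
    (hx : IsIntVec x) (i : Fin m) :
    ∃ k : ℤ, (A.map ((↑) : ℤ → ℝ)).mulVec x i = (k : ℝ) := by
  choose f hf using hx
  refine ⟨∑ j, A i j * f j, ?_⟩
  simp [Matrix.mulVec, dotProduct, Matrix.map_apply, hf]

lemma int_le_iff_le_floor {a : ℤ} {t : ℝ} : (a : ℝ) ≤ t ↔ a ≤ ⌊t⌋ := by
  rw [Int.le_floor]

/-- If `(x̄, z̄) ∈ F` and `z ≥ 0` satisfies `D·z ≤ p − C·x̄` and gives the same componentwise
floors `⌊B·z + u⌋ = ⌊B·z̄ + u⌋`, then `(x̄, z) ∈ F`. -/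
theorem bilevel_feasible_of_same_floor
    {n d m h : ℕ} (A : Matrix (Fin m) (Fin n) ℤ) (B : Matrix (Fin m) (Fin d) ℤ)
    (C : Matrix (Fin h) (Fin n) ℤ) (D : Matrix (Fin h) (Fin d) ℤ)
    (ψ : Fin n → ℤ) (u : Fin m → ℤ) (p : Fin h → ℤ)
    (xbar : Fin n → ℝ) (zbar : Fin d → ℝ)
    (hmem : (xbar, zbar) ∈ bilevelF A B C D ψ u p)
    (z : Fin d → ℝ) (hz0 : 0 ≤ z)
    (hzD : (D.map ((↑) : ℤ → ℝ)).mulVec z ≤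
      (fun i => (p i : ℝ)) - (C.map ((↑) : ℤ → ℝ)).mulVec xbar)
    (hfloor : ∀ i : Fin m,
      ⌊((B.map ((↑) : ℤ → ℝ)).mulVec z + (fun i => (u i : ℝ))) i⌋ =
      ⌊((B.map ((↑) : ℤ → ℝ)).mulVec zbar + (fun i => (u i : ℝ))) i⌋) :
    (xbar, z) ∈ bilevelF A B C D ψ u p := by
  obtain ⟨⟨hP1, _⟩, hint, hAx, hopt⟩ := hmem
  have key : ∀ (x' : Fin n → ℝ), IsIntVec x' →
      ((A.map ((↑) : ℤ → ℝ)).mulVec x' ≤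
        (B.map ((↑) : ℤ → ℝ)).mulVec z + (fun i => (u i : ℝ)) ↔
      (A.map ((↑) : ℤ → ℝ)).mulVec x' ≤
        (B.map ((↑) : ℤ → ℝ)).mulVec zbar + (fun i => (u i : ℝ))) := by
    intro x' hx'
    constructor <;> intro hle <;> intro i <;>
      obtain ⟨k, hk⟩ := intEntry_mulVec A x' hx' i
    · have := hle i
      rw [hk] at this ⊢
      rw [int_le_iff_le_floor] at this ⊢
      rwa [← hfloor i]
    · have := hle i
      rw [hk] at this ⊢
      rw [int_le_iff_le_floor] at this ⊢
      rwa [hfloor i]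
  refine ⟨⟨?_, hz0⟩, hint, ?_, ?_⟩
  · intro i
    have := hzD i
    simp only [Pi.sub_apply] at this
    simpa using add_le_of_le_sub_left this
  · exact (key xbar hint).mpr hAx
  · intro x' hx' hle
    exact hopt x' hx' ((key x' hx').mp hle)
end

section
/- Let α ∈ ℝ. For b = (b₁, b₂, b₃) ∈ ℝ × ℝ^m × ℝ^d, let P'_b = {x' ∈ ℝ^n : ψ·x' ≤ b₁ and A·x' ≤ b₂}, and let Q_α be the set of pairs (b, x) ∈ (ℝ × ℝ^m × ℝ^d) × ℝ^n satisfying c·x + e·b₃ ≤ α, C·x + D·b₃ ≤ p, b₃ ≥ 0, A·x ≤ b₂, b₁ = ψ·x − 1, and b₂ = B·b₃ + u. Then there exists (x, z) ∈ F with c·x + e·z ≤ α if and only if there exists (b, x) ∈ Q_α with x ∈ ℤ^n such that P'_b ∩ ℤ^n = ∅. -/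
open Matrix

lemma IsIntVec.exists_dotProduct_eq_intCast {n : ℕ} {x : Fin n → ℝ} (hx : IsIntVec x)
    (ψ : Fin n → ℤ) : ∃ k : ℤ, (fun i => (ψ i : ℝ)) ⬝ᵥ x = k := by
  choose k hk using hx
  exact ⟨∑ i, ψ i * k i, by simp [dotProduct, hk]⟩

/-- Integrality of the lower-level objective is what lets the strict improvement
`ψ·x' < ψ·x` be written as the closed constraint `ψ·x' ≤ ψ·x - 1` of `P'_b`. -/
lemma IsIntVec.dotProduct_le_dotProduct_sub_one_iff {n : ℕ} {x x' : Fin n → ℝ}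
    (hx : IsIntVec x) (hx' : IsIntVec x') (ψ : Fin n → ℤ) :
    (fun i => (ψ i : ℝ)) ⬝ᵥ x' ≤ (fun i => (ψ i : ℝ)) ⬝ᵥ x - 1 ↔
      (fun i => (ψ i : ℝ)) ⬝ᵥ x' < (fun i => (ψ i : ℝ)) ⬝ᵥ x := by
  obtain ⟨k, hk⟩ := hx.exists_dotProduct_eq_intCast ψ
  obtain ⟨k', hk'⟩ := hx'.exists_dotProduct_eq_intCast ψ
  rw [hk, hk']
  exact_mod_cast Int.le_sub_one_iff

lemma mem_bilevelF_iff {n d m h : ℕ} {A : Matrix (Fin m) (Fin n) ℤ}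
    {B : Matrix (Fin m) (Fin d) ℤ} {C : Matrix (Fin h) (Fin n) ℤ} {D : Matrix (Fin h) (Fin d) ℤ}
    {ψ : Fin n → ℤ} {u : Fin m → ℤ} {p : Fin h → ℤ} {x : Fin n → ℝ} {z : Fin d → ℝ} :
    (x, z) ∈ bilevelF A B C D ψ u p ↔
      (x, z) ∈ upperP C D p ∧ IsIntVec x ∧
        (A.map ((↑) : ℤ → ℝ)).mulVec x ≤
          (B.map ((↑) : ℤ → ℝ)).mulVec z + (fun i => (u i : ℝ)) ∧
        ¬ ∃ x' : Fin n → ℝ, IsIntVec x' ∧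
          (fun i => (ψ i : ℝ)) ⬝ᵥ x' ≤ (fun i => (ψ i : ℝ)) ⬝ᵥ x - 1 ∧
          (A.map ((↑) : ℤ → ℝ)).mulVec x' ≤
            (B.map ((↑) : ℤ → ℝ)).mulVec z + (fun i => (u i : ℝ)) := by
  refine and_congr_right fun _ => and_congr_right fun hx => and_congr_right fun _ => ?_
  simp only [not_exists, not_and]
  refine forall_congr' fun x' => forall_congr' fun hx' => ?_
  rw [hx.dotProduct_le_dotProduct_sub_one_iff hx', ← not_le, not_imp_not]

/-- Reduction of the decision version `BMILP_α` to parametric integer programming: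
there exists a bilevel feasible `(x,z) ∈ F` with `c·x + e·z ≤ α` if and only if there exist
`(b, x) ∈ Q_α` with `x` integral such that `P'_b` contains no integer point. -/
theorem bmilp_alpha_iff_pilp
    {n d m h : ℕ} (A : Matrix (Fin m) (Fin n) ℤ) (B : Matrix (Fin m) (Fin d) ℤ)
    (C : Matrix (Fin h) (Fin n) ℤ) (D : Matrix (Fin h) (Fin d) ℤ)
    (c : Fin n → ℤ) (e : Fin d → ℤ) (ψ : Fin n → ℤ) (u : Fin m → ℤ) (p : Fin h → ℤ)
    (α : ℝ) :
    (∃ xz ∈ bilevelF A B C D ψ u p,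
        (fun i => (c i : ℝ)) ⬝ᵥ xz.1 + (fun i => (e i : ℝ)) ⬝ᵥ xz.2 ≤ α) ↔
    (∃ (b₁ : ℝ) (b₂ : Fin m → ℝ) (b₃ : Fin d → ℝ) (x : Fin n → ℝ),
        -- (b, x) ∈ Q_α
        ((fun i => (c i : ℝ)) ⬝ᵥ x + (fun i => (e i : ℝ)) ⬝ᵥ b₃ ≤ α ∧
         (C.map ((↑) : ℤ → ℝ)).mulVec x + (D.map ((↑) : ℤ → ℝ)).mulVec b₃ ≤
           (fun i => (p i : ℝ)) ∧
         0 ≤ b₃ ∧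
         (A.map ((↑) : ℤ → ℝ)).mulVec x ≤ b₂ ∧
         b₁ = (fun i => (ψ i : ℝ)) ⬝ᵥ x - 1 ∧
         b₂ = (B.map ((↑) : ℤ → ℝ)).mulVec b₃ + (fun i => (u i : ℝ))) ∧
        -- x is integral
        IsIntVec x ∧
        -- P'_b contains no integer point
        ¬ ∃ x' : Fin n → ℝ, IsIntVec x' ∧
            (fun i => (ψ i : ℝ)) ⬝ᵥ x' ≤ b₁ ∧
            (A.map ((↑) : ℤ → ℝ)).mulVec x' ≤ b₂) := by
  constructor
  · rintro ⟨⟨x, z⟩, hF, hobj⟩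
    obtain ⟨⟨hC, hz⟩, hint, hA, hno_better⟩ := mem_bilevelF_iff.1 hF
    exact ⟨_, _, z, x, ⟨hobj, hC, hz, hA, rfl, rfl⟩, hint, hno_better⟩
  · rintro ⟨b₁, b₂, b₃, x, ⟨hobj, hC, hb₃, hA, rfl, rfl⟩, hint, hempty⟩
    exact ⟨(x, b₃), mem_bilevelF_iff.2 ⟨⟨hC, hb₃⟩, hint, hA, hempty⟩, hobj⟩
end

section
/- The infimum of −x + z over (x,z) ∈ F₀ equals −1, and it is not attained: there is no (x,z) ∈ F₀ with −x + z = −1. -/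
/-- The bilevel feasible set of the one-dimensional example. -/
def F0 : Set (ℝ × ℝ) :=
  {q | 0 ≤ q.2 ∧ q.2 ≤ 1 ∧ (∃ k : ℤ, q.1 = (k : ℝ)) ∧ q.2 ≤ q.1 ∧ q.1 ≤ 1 ∧
       ∀ x' : ℤ, q.2 ≤ (x' : ℝ) → (x' : ℝ) ≤ 1 → q.1 ≤ (x' : ℝ)}


/-- The infimum of `−x + z` over the example's bilevel feasible set `F₀` is `−1`, and it is
not attained. -/
theorem F0_infimum_not_attained :
    sInf ((fun q : ℝ × ℝ => -q.1 + q.2) '' F0) = -1 ∧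
    ¬ ∃ q ∈ F0, -q.1 + q.2 = -1 := by
  have hmem : ∀ ε : ℝ, 0 < ε → ε ≤ 1 → ((1 : ℝ), ε) ∈ F0 := by
    intro ε hε hε1
    refine ⟨le_of_lt hε, hε1, ⟨1, by norm_num⟩, hε1, le_refl _, ?_⟩
    intro x' h1 h2
    have : (0 : ℝ) < (x' : ℝ) := lt_of_lt_of_le hε h1
    have h0 : (0 : ℤ) < x' := by exact_mod_cast this
    have h1' : (1 : ℤ) ≤ x' := h0
    show (1:ℝ) ≤ (x':ℝ)
    exact_mod_cast h1'
  have hlb : ∀ y ∈ ((fun q : ℝ × ℝ => -q.1 + q.2) '' F0), (-1 : ℝ) ≤ y := by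
    rintro y ⟨q, ⟨hz0, _, _, _, hx1, _⟩, rfl⟩
    simp only
    linarith
  constructor
  · apply le_antisymm
    · -- sInf ≤ -1 : values -1 + ε get arbitrarily close
      refine le_of_forall_pos_le_add ?_
      intro ε hε
      rcases le_or_gt ε 1 with h1 | h1
      · have : (-1 + ε : ℝ) ∈ ((fun q : ℝ × ℝ => -q.1 + q.2) '' F0) := by
          exact ⟨((1 : ℝ), ε), hmem ε hε h1, by ring⟩
        calc sInf ((fun q : ℝ × ℝ => -q.1 + q.2) '' F0) ≤ -1 + ε :=
              csInf_le ⟨-1, hlb⟩ this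
          _ = -1 + ε := rfl
      · have : (0 : ℝ) ∈ ((fun q : ℝ × ℝ => -q.1 + q.2) '' F0) := by
          exact ⟨((1 : ℝ), 1), hmem 1 one_pos le_rfl, by norm_num⟩
        have h := csInf_le ⟨-1, hlb⟩ this
        linarith
    · exact le_csInf ⟨0, ((1 : ℝ), 1), hmem 1 one_pos le_rfl, by norm_num⟩ hlb
  · rintro ⟨q, ⟨hz0, hz1, ⟨k, hk⟩, hzx, hx1, hmin⟩, heq⟩
    -- -x + z = -1 with x ≤ 1, z ≥ 0 forces z = 0, x = 1
    have hz : q.2 = 0 := by linarith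
    have hx : q.1 = 1 := by linarith
    have := hmin 0 (by simp [hz]) (by norm_num)
    simp [hx] at this
    linarith
end

section
/- The set F₀ is neither convex nor closed as a subset of ℝ². -/
open Set

/-- The lower level picks the least integer in `[z, 1]`: that is `0` for `z = 0` and `1` for
`z ∈ (0, 1]`. -/
theorem F0_eq : F0 = {(0, 0)} ∪ {1} ×ˢ Ioc 0 1 := by
  ext ⟨x, z⟩
  simp only [F0, mem_ofPred_eq, mem_union, mem_singleton_iff, Prod.mk.injEq, mem_prod, mem_Ioc]
  constructor
  · rintro ⟨hz0, hz1, ⟨k, rfl⟩, hzk, hk1, hmin⟩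
    rcases hz0.eq_or_lt with rfl | hz_pos
    · have hk0 : (k : ℝ) ≤ 0 := by exact_mod_cast hmin 0 (by simp) (by simp)
      exact Or.inl ⟨le_antisymm hk0 hzk, rfl⟩
    · have hk_pos : (0 : ℤ) < k := by exact_mod_cast hz_pos.trans_le hzk
      have hk1' : k ≤ 1 := by exact_mod_cast hk1
      have hk : k = 1 := by omega
      exact Or.inr ⟨by simp [hk], hz_pos, hz1⟩
  · rintro (⟨rfl, rfl⟩ | ⟨rfl, hz_pos, hz1⟩)
    · refine ⟨le_rfl, zero_le_one, ⟨0, by simp⟩, le_rfl, zero_le_one, fun x' hx' _ => hx'⟩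
    · refine ⟨hz_pos.le, hz1, ⟨1, by simp⟩, hz1, le_rfl, fun x' hx' _ => ?_⟩
      have : (0 : ℤ) < x' := by exact_mod_cast hz_pos.trans_le hx'
      exact_mod_cast (this : (1 : ℤ) ≤ x')

/-- The example's bilevel feasible set `F₀` is neither convex nor closed. -/
theorem F0_not_convex_not_closed :
    ¬ Convex ℝ F0 ∧ ¬ IsClosed F0 := by
  rw [F0_eq]
  constructor
  · intro hconv
    have hmid := hconv (Or.inl rfl) (Or.inr ⟨rfl, one_pos, le_rfl⟩ : ((1 : ℝ), (1 : ℝ)) ∈ _)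
      (by norm_num : (0 : ℝ) ≤ 1 / 2) (by norm_num : (0 : ℝ) ≤ 1 / 2) (by norm_num)
    norm_num at hmid
  · intro hclosed
    have hlimit : ((1 : ℝ), (0 : ℝ)) ∈ closure ({1} ×ˢ Ioc 0 1 : Set (ℝ × ℝ)) := by
      rw [closure_prod_eq, closure_singleton, closure_Ioc zero_ne_one]
      exact ⟨rfl, le_rfl, zero_le_one⟩
    have := hclosed.closure_subset (closure_mono subset_union_right hlimit)
    norm_num at this
end

section
/- Let S = {z ∈ ℝ^d : D·z ≤ q and E·z < r} be nonempty, where D is a real h×d matrix, E a real m×d matrix, q ∈ ℝ^h, r ∈ ℝ^m (the first system non-strict, the second strict, componentwise). Let k = 1 + dim(cl S), where dim denotes the dimension of the affine hull of the closure cl S of S. If z¹, …, z^k are affinely independent points of cl S, then their barycenter (1/k)·(z¹ + ⋯ + z^k) belongs to S. -/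
/-!
Every point of `cl S` satisfies the non-strict system `D z ≤ q`, `E z ≤ r`, and so does the
barycenter `b` of the `zⁱ`, being an average. If some strict row were tight at `b`, it would be
tight at every `zⁱ`. But `k` affinely independent points of `cl S` span the whole affine hull of
`cl S`, which contains `S`, so that row would be tight on `S` too — impossible.
-/

open Matrix Set

section Barycenter

variable {V ι : Type*} [AddCommGroup V] [Module ℝ V] [Fintype ι]

lemma map_inv_card_smul_sum (g : V →ₗ[ℝ] ℝ) (z : ι → V) :
    g ((Fintype.card ι : ℝ)⁻¹ • ∑ i, z i) =
      (Fintype.card ι : ℝ)⁻¹ * ∑ i, g (z i) := by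
  rw [map_smul, map_sum, smul_eq_mul]

variable [Nonempty ι] (g : V →ₗ[ℝ] ℝ) {c : ℝ} {z : ι → V}

lemma map_inv_card_smul_sum_le (h : ∀ i, g (z i) ≤ c) :
    g ((Fintype.card ι : ℝ)⁻¹ • ∑ i, z i) ≤ c := by
  rw [map_inv_card_smul_sum, inv_mul_le_iff₀ (by positivity)]
  calc ∑ i, g (z i) ≤ ∑ _i : ι, c := Finset.sum_le_sum fun i _ => h i
    _ = Fintype.card ι * c := by simp

lemma map_inv_card_smul_sum_lt (h : ∀ i, g (z i) ≤ c) {x : V}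
    (hx : x ∈ affineSpan ℝ (range z)) (hgx : g x < c) :
    g ((Fintype.card ι : ℝ)⁻¹ • ∑ i, z i) < c := by
  have hlt : ∃ i, g (z i) < c := by
    by_contra! hge
    have hconst : (range z).EqOn g.toAffineMap (AffineMap.const ℝ V c) := by
      rintro - ⟨i, rfl⟩
      exact (h i).antisymm (hge i)
    exact hgx.ne (AffineMap.eqOn_affineSpan hconst hx)
  obtain ⟨i, hi⟩ := hlt
  rw [map_inv_card_smul_sum, inv_mul_lt_iff₀ (by positivity)]
  calc ∑ i, g (z i) < ∑ _i : ι, c :=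
        Finset.sum_lt_sum (fun i _ => h i) ⟨i, Finset.mem_univ i, hi⟩
    _ = Fintype.card ι * c := by simp

end Barycenter

lemma closure_subset_setOf_mulVec_le {m n : Type*} [Fintype n] (A : Matrix m n ℝ) (i : m)
    {c : ℝ} {s : Set (n → ℝ)} (hs : ∀ x ∈ s, (A *ᵥ x) i ≤ c) :
    closure s ⊆ {x | (A *ᵥ x) i ≤ c} :=
  closure_minimal hs (isClosed_le (by fun_prop) continuous_const)

/-- Barycenter lemma for quasi-polyhedral sets: if `S = {z : D·z ≤ q, E·z < r}` is nonempty
and `k = 1 + dim (cl S)`, then the barycenter of any `k` affinely independent points of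
`cl S` lies in `S`. -/
theorem barycenter_mem_quasiPolyhedron
    {d h m : ℕ} (D : Matrix (Fin h) (Fin d) ℝ) (E : Matrix (Fin m) (Fin d) ℝ)
    (q : Fin h → ℝ) (r : Fin m → ℝ)
    (S : Set (Fin d → ℝ))
    (hS : S = {z | D.mulVec z ≤ q ∧ ∀ i : Fin m, (E.mulVec z) i < r i})
    (hne : S.Nonempty)
    (k : ℕ)
    (hk : k = 1 + Module.finrank ℝ (affineSpan ℝ (closure S)).direction)
    (z : Fin k → (Fin d → ℝ))
    (hz : ∀ i, z i ∈ closure S)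
    (hindep : AffineIndependent ℝ z) :
    ((k : ℝ))⁻¹ • (∑ i, z i) ∈ S := by
  have : Nonempty (Fin k) := ⟨⟨0, by omega⟩⟩
  have hspan : affineSpan ℝ (range z) = affineSpan ℝ (closure S) :=
    hindep.affineSpan_eq_of_le_of_card_eq_finrank_add_one
      (affineSpan_le.2 (range_subset_iff.2 fun i => subset_affineSpan ℝ _ (hz i)))
      (by rw [Fintype.card_fin]; omega)
  obtain ⟨w, hw⟩ := hne
  have hw_span : w ∈ affineSpan ℝ (range z) :=
    hspan ▸ subset_affineSpan ℝ _ (subset_closure hw)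
  subst hS
  rw [show (k : ℝ) = Fintype.card (Fin k) by simp]
  refine ⟨fun i => ?_, fun i => ?_⟩
  · exact map_inv_card_smul_sum_le (LinearMap.proj i ∘ₗ D.mulVecLin)
      fun j => closure_subset_setOf_mulVec_le D i (fun x hx => hx.1 i) (hz j)
  · exact map_inv_card_smul_sum_lt (LinearMap.proj i ∘ₗ E.mulVecLin)
      (fun j => closure_subset_setOf_mulVec_le E i (fun x hx => (hx.2 i).le) (hz j))
      hw_span (hw.2 i)
end

section
/- Let S = {z ∈ ℝ^d : D·z ≤ q and E·z < r} be nonempty, where D is a real h×d matrix, E a real m×d matrix, q ∈ ℝ^h, r ∈ ℝ^m (the first system non-strict, the second strict, componentwise). Let f(z) = b·z + u₀ be an affine function (b ∈ ℝ^d, u₀ ∈ ℝ) that is bounded below on the closure cl S, and set ρ = inf{f(z) : z ∈ cl S}. Then there exists z ∈ S with ⌊ρ⌋ ≤ f(z) < ⌊ρ⌋ + 1. -/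
/-!
Since `ρ < ⌊ρ⌋ + 1 =: c`, some point of `cl S` has `f`-value below `c`; as `f` is continuous,
`f⁻¹' (-∞, c)` is an open neighbourhood of that point, so it also meets `S`. Any point of `S`
lies in `cl S`, so its value is at least `ρ ≥ ⌊ρ⌋`.
-/

open Matrix

theorem exists_mem_lt_of_sInf_image_closure_lt {X α : Type*} [TopologicalSpace X]
    [ConditionallyCompleteLinearOrder α] [TopologicalSpace α] [ClosedIciTopology α]
    {f : X → α} (hf : Continuous f) {S : Set X} (hne : S.Nonempty) {c : α}
    (hc : sInf (f '' closure S) < c) : ∃ z ∈ S, f z < c := by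
  obtain ⟨_, ⟨w, hw, rfl⟩, hwc⟩ :=
    exists_lt_of_csInf_lt ((hne.mono subset_closure).image f) hc
  obtain ⟨z, hzc, hzS⟩ := mem_closure_iff.1 hw _ (isOpen_Iio.preimage hf) hwc
  exact ⟨z, hzS, hzc⟩

theorem exists_mem_sInf_image_closure_le_lt {X α : Type*} [TopologicalSpace X]
    [ConditionallyCompleteLinearOrder α] [TopologicalSpace α] [ClosedIciTopology α]
    {f : X → α} (hf : Continuous f) {S : Set X} (hne : S.Nonempty)
    (hbdd : BddBelow (f '' closure S)) {c : α} (hc : sInf (f '' closure S) < c) :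
    ∃ z ∈ S, sInf (f '' closure S) ≤ f z ∧ f z < c := by
  obtain ⟨z, hzS, hzc⟩ := exists_mem_lt_of_sInf_image_closure_lt hf hne hc
  exact ⟨z, hzS, csInf_le hbdd ⟨z, subset_closure hzS, rfl⟩, hzc⟩

theorem exists_point_near_infimum_quasiPolyhedron_general
    {d : ℕ}
    (S : Set (Fin d → ℝ))
    (hne : S.Nonempty)
    (b : Fin d → ℝ) (u₀ : ℝ)
    (f : (Fin d → ℝ) → ℝ) (hf : f = fun z => b ⬝ᵥ z + u₀)
    (hbdd : BddBelow (f '' closure S))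
    (ρ : ℝ) (hρ : ρ = sInf (f '' closure S)) :
    ∃ z ∈ S, (⌊ρ⌋ : ℝ) ≤ f z ∧ f z < (⌊ρ⌋ : ℝ) + 1 := by
  have hfc : Continuous f := hf ▸ by fun_prop
  subst hρ
  obtain ⟨z, hzS, hρz, hzc⟩ :=
    exists_mem_sInf_image_closure_le_lt hfc hne hbdd (Int.lt_floor_add_one _)
  exact ⟨z, hzS, (Int.floor_le _).trans hρz, hzc⟩

/-- If `S = {z : D·z ≤ q, E·z < r}` is nonempty and the affine function `f(z) = b·z + u₀`
is bounded below on `cl S` with infimum `ρ` over `cl S`, then some point `z ∈ S` satisfies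
`⌊ρ⌋ ≤ f(z) < ⌊ρ⌋ + 1`. -/
theorem exists_point_near_infimum_quasiPolyhedron
    {d h m : ℕ} (D : Matrix (Fin h) (Fin d) ℝ) (E : Matrix (Fin m) (Fin d) ℝ)
    (q : Fin h → ℝ) (r : Fin m → ℝ)
    (S : Set (Fin d → ℝ))
    (hS : S = {z | D.mulVec z ≤ q ∧ ∀ i : Fin m, (E.mulVec z) i < r i})
    (hne : S.Nonempty)
    (b : Fin d → ℝ) (u₀ : ℝ)
    (f : (Fin d → ℝ) → ℝ) (hf : f = fun z => b ⬝ᵥ z + u₀)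
    (hbdd : BddBelow (f '' closure S))
    (ρ : ℝ) (hρ : ρ = sInf (f '' closure S)) :
    ∃ z ∈ S, (⌊ρ⌋ : ℝ) ≤ f z ∧ f z < (⌊ρ⌋ : ℝ) + 1 :=
  exists_point_near_infimum_quasiPolyhedron_general S hne b u₀ f hf hbdd ρ hρ
end

section
/- Let T = {z ∈ ℝ^d : D·z ≤ q and β ≤ B·z + u ≤ β + 1} be a nonempty bounded set, where D is a real h×d matrix, B a real m×d matrix, q ∈ ℝ^h, u ∈ ℝ^m, β ∈ ℝ^m, and let e ∈ ℝ^d. Then there exist disjoint subsets I, J ⊆ {1,…,m} such that the linear program min{e·z : D·z ≤ q, (B·z + u)_i ≥ β_i for all i ∈ I, (B·z + u)_j ≤ β_j + 1 for all j ∈ J} has an optimal solution and its optimal value equals min{e·z : z ∈ T}. -/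
/-!
Since `T` is compact, `e ⬝ᵥ ·` attains its minimum on `T` at some `z₁`. Take for `I` and `J` the
constraints `β ≤ B z + u` and `B z + u ≤ β + 1` that are active at `z₁`. Near `z₁` the inactive
ones hold strictly, so the relaxed polyhedron `R` coincides with `T` near `z₁`: thus `z₁` is a local
minimum of the linear objective on the convex set `R`, hence a global one.
-/

open Matrix Filter Topology

theorem IsMinOn.of_convexOn_of_mem_nhdsWithin {E β : Type*} [AddCommGroup E] [TopologicalSpace E]
    [Module ℝ E] [IsTopologicalAddGroup E] [ContinuousSMul ℝ E] [AddCommGroup β] [PartialOrder β]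
    [IsOrderedAddMonoid β] [Module ℝ β] [IsOrderedModule ℝ β] [PosSMulReflectLE ℝ β]
    {f : E → β} {s t : Set E} {a : E} (hmin : IsMinOn f t a) (ha : a ∈ s) (hts : t ∈ 𝓝[s] a)
    (hf : ConvexOn ℝ s f) : IsMinOn f s a :=
  IsMinOn.of_isLocalMinOn_of_convexOn ha (hmin.filter_mono (le_principal_iff.2 hts)) hf

namespace SliceLP

variable {ι κ ν : Type*} [Fintype ι] (D : Matrix ν ι ℝ) (B : Matrix κ ι ℝ) (q : ν → ℝ)
  (u β : κ → ℝ)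

def slice : Set (ι → ℝ) :=
  {z | D *ᵥ z ≤ q ∧ β ≤ B *ᵥ z + u ∧ B *ᵥ z + u ≤ fun i => β i + 1}

def relaxation (I J : Finset κ) : Set (ι → ℝ) :=
  {z | D *ᵥ z ≤ q ∧ (∀ i ∈ I, β i ≤ (B *ᵥ z + u) i) ∧ (∀ j ∈ J, (B *ᵥ z + u) j ≤ β j + 1)}

variable {D B q u β}

theorem isClosed_slice : IsClosed (slice D B q u β) := by
  have hD : Continuous fun z : ι → ℝ => D *ᵥ z := continuous_const.matrix_mulVec continuous_id
  have hB : Continuous fun z : ι → ℝ => B *ᵥ z + u :=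
    (continuous_const.matrix_mulVec continuous_id).add continuous_const
  exact (isClosed_le hD continuous_const).inter
    ((isClosed_le continuous_const hB).inter (isClosed_le hB continuous_const))

theorem convex_relaxation (I J : Finset κ) : Convex ℝ (relaxation D B q u β I J) := by
  intro x ⟨hDx, hIx, hJx⟩ y ⟨hDy, hIy, hJy⟩ a b ha hb hab
  obtain rfl : b = 1 - a := by linarith
  refine ⟨fun k => ?_, fun i hi => ?_, fun j hj => ?_⟩ <;>
    simp only [mulVec_add, mulVec_smul, Pi.add_apply, Pi.smul_apply, smul_eq_mul] at *
  · nlinarith [mul_le_mul_of_nonneg_left (hDx k) ha, mul_le_mul_of_nonneg_left (hDy k) hb]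
  · nlinarith [mul_le_mul_of_nonneg_left (hIx i hi) ha, mul_le_mul_of_nonneg_left (hIy i hi) hb]
  · nlinarith [mul_le_mul_of_nonneg_left (hJx j hj) ha, mul_le_mul_of_nonneg_left (hJy j hj) hb]

theorem slice_subset_relaxation (I J : Finset κ) :
    slice D B q u β ⊆ relaxation D B q u β I J :=
  fun _ ⟨hD, hlow, hupp⟩ => ⟨hD, fun i _ => hlow i, fun j _ => hupp j⟩

variable [Fintype κ]

variable (B u β) in
noncomputable def activeLower (z : ι → ℝ) : Finset κ := {i | (B *ᵥ z + u) i = β i}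

variable (B u β) in
noncomputable def activeUpper (z : ι → ℝ) : Finset κ := {j | (B *ᵥ z + u) j = β j + 1}

theorem disjoint_activeLower_activeUpper (z : ι → ℝ) :
    Disjoint (activeLower B u β z) (activeUpper B u β z) := by
  simp only [Finset.disjoint_left, activeLower, activeUpper, Finset.mem_filter,
    Finset.mem_univ, true_and]
  intro i hlow hupp
  linarith

theorem slice_mem_nhdsWithin_relaxation {z : ι → ℝ} (hz : z ∈ slice D B q u β) :
    slice D B q u β ∈ 𝓝[relaxation D B q u β (activeLower B u β z) (activeUpper B u β z)] z := by
  obtain ⟨-, hlow, hupp⟩ := hz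
  have hA : ∀ i, Continuous fun y : ι → ℝ => (B *ᵥ y + u) i := fun i =>
    (continuous_apply i).comp ((continuous_const.matrix_mulVec continuous_id).add continuous_const)
  have hinactive : ∀ᶠ y in 𝓝 z, ∀ i,
      (i ∉ activeLower B u β z → β i < (B *ᵥ y + u) i) ∧
      (i ∉ activeUpper B u β z → (B *ᵥ y + u) i < β i + 1) := by
    refine eventually_all.2 fun i => .and ?_ ?_ <;> rw [eventually_imp_distrib_left] <;> intro hi
    · refine continuousAt_const.eventually_lt (hA i).continuousAt ((hlow i).lt_of_ne ?_)
      simpa [activeLower, eq_comm] using hi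
    · refine (hA i).continuousAt.eventually_lt continuousAt_const ((hupp i).lt_of_ne ?_)
      simpa [activeUpper] using hi
  rw [mem_nhdsWithin_iff_eventually]
  filter_upwards [hinactive] with y hy ⟨hD, hI, hJ⟩
  refine ⟨hD, fun i => ?_, fun j => ?_⟩
  · by_cases hi : i ∈ activeLower B u β z
    exacts [hI i hi, ((hy i).1 hi).le]
  · by_cases hj : j ∈ activeUpper B u β z
    exacts [hJ j hj, ((hy j).2 hj).le]

end SliceLP

open SliceLP

/-- For a nonempty bounded set `T = {z : D·z ≤ q, β ≤ B·z + u ≤ β + 1}`, there are disjoint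
index sets `I, J ⊆ {1,…,m}` such that the relaxed linear program
`min {e·z : D·z ≤ q, (B·z+u)_i ≥ β_i (i ∈ I), (B·z+u)_j ≤ β_j + 1 (j ∈ J)}` has an optimal
solution whose value equals `min {e·z : z ∈ T}`. -/
theorem slice_lp_relaxation
    {d h m : ℕ} (D : Matrix (Fin h) (Fin d) ℝ) (B : Matrix (Fin m) (Fin d) ℝ)
    (q : Fin h → ℝ) (u β : Fin m → ℝ) (e : Fin d → ℝ)
    (T : Set (Fin d → ℝ))
    (hT : T = {z | D.mulVec z ≤ q ∧ β ≤ B.mulVec z + u ∧ B.mulVec z + u ≤ fun i => β i + 1})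
    (hTne : T.Nonempty) (hTbdd : Bornology.IsBounded T) :
    ∃ I J : Finset (Fin m), Disjoint I J ∧
      ∀ R : Set (Fin d → ℝ),
        R = {z | D.mulVec z ≤ q ∧ (∀ i ∈ I, β i ≤ (B.mulVec z + u) i) ∧
                 (∀ j ∈ J, (B.mulVec z + u) j ≤ β j + 1)} →
        ∃ z₀ ∈ R, (∀ z ∈ R, e ⬝ᵥ z₀ ≤ e ⬝ᵥ z) ∧
          (∃ z₁ ∈ T, (∀ z ∈ T, e ⬝ᵥ z₁ ≤ e ⬝ᵥ z) ∧ e ⬝ᵥ z₀ = e ⬝ᵥ z₁) := by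
  subst hT
  have hobj : Continuous (e ⬝ᵥ ·) := continuous_const.dotProduct continuous_id
  obtain ⟨z₁, hz₁, hmin⟩ :=
    (Metric.isCompact_of_isClosed_isBounded isClosed_slice hTbdd).exists_isMinOn hTne
      hobj.continuousOn
  refine ⟨activeLower B u β z₁, activeUpper B u β z₁, disjoint_activeLower_activeUpper z₁, ?_⟩
  rintro R rfl
  have hz₁R := slice_subset_relaxation (activeLower B u β z₁) (activeUpper B u β z₁) hz₁
  have hminR : IsMinOn (e ⬝ᵥ ·) (relaxation D B q u β _ _) z₁ :=
    hmin.of_convexOn_of_mem_nhdsWithin hz₁R (slice_mem_nhdsWithin_relaxation hz₁)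
      ((dotProductBilin ℝ ℝ e).convexOn (convex_relaxation _ _))
  exact ⟨z₁, hz₁R, hminR, z₁, hz₁, hmin, rfl⟩
end
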